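/- Let G=(V,E) be a graph on n vertices and k a nonnegative integer. Suppose the h₂ cost of every extreme 2-partition of V is larger than k. If there exists a non-trivial, non-extreme 2-partition π with h₂(π) ≤ k, then there exists a vertex s and a set F ⊆ V with |F| ≤ √(k/n) such that F is a (√(nk), √(n(n−1)/2))-feasible flipping set for the 2-partition π₀ = (N_G[s], V∖N_G[s]). -/
import Mathlib


open Finset

variable {V : Type*} [Fintype V] [DecidableEq V]

/-- A 2-partition of the vertex set is given by an indicator `π : V → Bool`
(the two clusters are the preimages of `true` and `false`).
Two vertices `u ≠ v` are in conflict if they are in the same cluster but not adjacent,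
or in different clusters but adjacent. -/
def Conflict (G : SimpleGraph V) (π : V → Bool) (u v : V) : Prop :=
  u ≠ v ∧ ((π u = π v) ↔ ¬ G.Adj u v)

instance (G : SimpleGraph V) [DecidableRel G.Adj] (π : V → Bool) (u v : V) :
    Decidable (Conflict G π u v) := by
  unfold Conflict; infer_instance

/-- `C_π(v)` : the set of vertices in conflict with `v`. -/
def conflictSet (G : SimpleGraph V) [DecidableRel G.Adj] (π : V → Bool) (v : V) : Finset V :=
  Finset.univ.filter (fun u => Conflict G π v u)

/-- `c_π(v)` : the conflict number of `v`. -/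
def cNum (G : SimpleGraph V) [DecidableRel G.Adj] (π : V → Bool) (v : V) : ℕ :=
  (conflictSet G π v).card

/-- Flipping the set `F` : moving every vertex of `F` to the other cluster. -/
def flipSet (π : V → Bool) (F : Finset V) : V → Bool :=
  fun v => if v ∈ F then !(π v) else π v

/-- `h₁(π)` : the total conflict number. -/
def h1 (G : SimpleGraph V) [DecidableRel G.Adj] (π : V → Bool) : ℕ :=
  ∑ v, cNum G π v

/-- `h₂(π)` : the sum of squared conflict numbers. -/
def h2 (G : SimpleGraph V) [DecidableRel G.Adj] (π : V → Bool) : ℕ :=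
  ∑ v, (cNum G π v) ^ 2

set_option linter.unusedSectionVars false

variable {G : SimpleGraph V} [DecidableRel G.Adj] {π : V → Bool} {u v w : V}

lemma conflict_comm : Conflict G π u v ↔ Conflict G π v u := by
  unfold Conflict
  constructor <;> rintro ⟨h1, h2⟩ <;>
    exact ⟨h1.symm, by rw [eq_comm, G.adj_comm] at h2; exact h2⟩

lemma mem_conflictSet : u ∈ conflictSet G π v ↔ Conflict G π v u := by
  simp [conflictSet]

lemma notMem_conflictSet_self : v ∉ conflictSet G π v := by
  simp [mem_conflictSet, Conflict]

lemma conflictSet_subset_erase : conflictSet G π v ⊆ univ.erase v := by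
  intro u hu
  rw [mem_conflictSet] at hu
  exact mem_erase.2 ⟨hu.1.symm, mem_univ u⟩

lemma flipSet_singleton_apply (π : V → Bool) (v u : V) :
    flipSet π {v} u = if u = v then !(π u) else π u := by
  simp [flipSet]

lemma conflict_flip_toggle (huv : u ≠ v) :
    Conflict G (flipSet π {v}) v u ↔ ¬ Conflict G π v u := by
  unfold Conflict
  rw [flipSet_singleton_apply, flipSet_singleton_apply]
  simp only [if_pos rfl, if_neg huv]
  have hvu : v ≠ u := fun h => huv h.symm
  cases hπ : π v <;> cases hπu : π u <;> simp [hπ, hπu, hvu] <;> tauto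

lemma conflict_flip_other (hu : u ≠ v) (hw : w ≠ v) :
    Conflict G (flipSet π {v}) u w ↔ Conflict G π u w := by
  unfold Conflict
  rw [flipSet_singleton_apply, flipSet_singleton_apply, if_neg hu, if_neg hw]

lemma conflictSet_flip_self :
    conflictSet G (flipSet π {v}) v = (univ.erase v) \ conflictSet G π v := by
  ext u
  by_cases hu : u = v
  · subst hu
    simp [mem_conflictSet, Conflict]
  · rw [mem_conflictSet, conflict_flip_toggle hu, mem_sdiff, mem_erase, mem_conflictSet]
    simp [hu]

lemma conflictSet_flip_other (hu : u ≠ v) :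
    conflictSet G (flipSet π {v}) u =
      if v ∈ conflictSet G π u then (conflictSet G π u).erase v
      else insert v (conflictSet G π u) := by
  ext w
  by_cases hw : w = v
  · subst hw
    rw [mem_conflictSet, conflict_comm, conflict_flip_toggle hu, ← conflict_comm (v := w)]
    rw [← mem_conflictSet (v := u)]
    by_cases hm : w ∈ conflictSet G π u <;> simp [hm, hu]
  · rw [mem_conflictSet, conflict_flip_other hu hw, ← mem_conflictSet]
    by_cases hm : v ∈ conflictSet G π u <;> simp [hm, hw]

lemma cNum_flip_self : cNum G (flipSet π {v}) v + cNum G π v + 1 = Fintype.card V := by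
  unfold cNum
  rw [conflictSet_flip_self, card_sdiff_add_card_eq_card conflictSet_subset_erase,
    card_erase_add_one (mem_univ v), card_univ]

lemma cNum_flip_mem (hu : u ≠ v) (hm : v ∈ conflictSet G π u) :
    cNum G (flipSet π {v}) u + 1 = cNum G π u := by
  unfold cNum
  rw [conflictSet_flip_other hu, if_pos hm, card_erase_add_one hm]

lemma cNum_flip_notMem (hu : u ≠ v) (hm : v ∉ conflictSet G π u) :
    cNum G (flipSet π {v}) u = cNum G π u + 1 := by
  unfold cNum
  rw [conflictSet_flip_other hu, if_neg hm, card_insert_of_notMem hm]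

lemma key_ineq (hmax : ∀ u, cNum G π u ≤ cNum G π v)
    (hmin : h2 G π ≤ h2 G (flipSet π {v})) :
    2 * ((cNum G π v) ^ 2 + cNum G π v) + Fintype.card V ≤ (Fintype.card V) ^ 2 := by
  classical
  set π' := flipSet π {v} with hπ'
  set m := cNum G π v with hm
  set C := conflictSet G π v with hC
  set E := (univ : Finset V).erase v with hE
  set O := E \ C with hO
  have hCE : C ⊆ E := conflictSet_subset_erase
  have hrv : cNum G π' v = O.card := by
    unfold cNum
    rw [hπ', conflictSet_flip_self, ← hC, ← hE, ← hO]
  set r := O.card with hr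
  have hn : r + m + 1 = Fintype.card V := by
    have := cNum_flip_self (G := G) (π := π) (v := v)
    rwa [← hπ', hrv, ← hm] at this
  -- pointwise values on C and O
  have hCval : ∀ u ∈ C, cNum G π u = cNum G π' u + 1 := by
    intro u hu
    have hconf : Conflict G π v u := mem_conflictSet.1 hu
    have huv : u ≠ v := hconf.1.symm
    have hmem : v ∈ conflictSet G π u := mem_conflictSet.2 (conflict_comm.1 hconf)
    exact (cNum_flip_mem huv hmem).symm
  have hOval : ∀ u ∈ O, cNum G π' u = cNum G π u + 1 := by
    intro u hu
    rw [hO, mem_sdiff, hE, mem_erase] at hu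
    have huv : u ≠ v := hu.1.1
    have hmem : v ∉ conflictSet G π u := by
      intro hmem
      exact hu.2 (mem_conflictSet.2 (conflict_comm.1 (mem_conflictSet.1 hmem)))
    exact cNum_flip_notMem huv hmem
  -- split sums
  have hsplit : ∀ σ : V → Bool,
      h2 G σ = (∑ u ∈ O, (cNum G σ u) ^ 2 + ∑ u ∈ C, (cNum G σ u) ^ 2) + (cNum G σ v) ^ 2 := by
    intro σ
    unfold h2
    rw [← Finset.sum_erase_add univ _ (mem_univ v), ← hE, ← Finset.sum_sdiff hCE]
  have h2π := hsplit π
  have h2π' := hsplit π'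
  have hCsum : ∑ u ∈ C, (cNum G π u) ^ 2
      = ∑ u ∈ C, (cNum G π' u) ^ 2 + 2 * (∑ u ∈ C, cNum G π' u) + m := by
    have : ∑ u ∈ C, (cNum G π u) ^ 2
        = ∑ u ∈ C, ((cNum G π' u) ^ 2 + 2 * cNum G π' u + 1) := by
      refine Finset.sum_congr rfl (fun u hu => ?_)
      rw [hCval u hu]; ring
    rw [this, Finset.sum_add_distrib, Finset.sum_add_distrib, Finset.sum_const,
      Finset.mul_sum, smul_eq_mul, mul_one]
    rw [hm]; rfl
  have hOsum : ∑ u ∈ O, (cNum G π' u) ^ 2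
      = ∑ u ∈ O, (cNum G π u) ^ 2 + 2 * (∑ u ∈ O, cNum G π u) + r := by
    have : ∑ u ∈ O, (cNum G π' u) ^ 2
        = ∑ u ∈ O, ((cNum G π u) ^ 2 + 2 * cNum G π u + 1) := by
      refine Finset.sum_congr rfl (fun u hu => ?_)
      rw [hOval u hu]; ring
    rw [this, Finset.sum_add_distrib, Finset.sum_add_distrib, Finset.sum_const,
      Finset.mul_sum, smul_eq_mul, mul_one]
  have hObound : ∑ u ∈ O, cNum G π u ≤ r * m := by
    have := Finset.sum_le_card_nsmul O (cNum G π) m (fun u _ => hmax u)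
    simpa [hr, smul_eq_mul] using this
  have hrvv : cNum G π' v = r := hrv
  have hmain : m ^ 2 + m ≤ r ^ 2 + 2 * (r * m) + r := by
    rw [h2π, h2π', hCsum, hOsum, hrvv] at hmin
    have hz := Nat.zero_le (∑ u ∈ C, cNum G π' u)
    linarith
  nlinarith [hmain, hn]

lemma cNum_congr {σ τ : V → Bool} (h : ∀ u w, σ u = σ w ↔ τ u = τ w) (v : V) :
    cNum G σ v = cNum G τ v := by
  unfold cNum conflictSet
  congr 1
  apply Finset.filter_congr
  intro u _
  unfold Conflict
  rw [h v u]

lemma flip_conflictSet_eq (ρ : V → Bool) (s : V) :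
    flipSet (fun u => decide (u ∈ insert s (G.neighborFinset s))) (conflictSet G ρ s)
      = fun u => ρ u == ρ s := by
  funext u
  unfold flipSet
  by_cases hu : u = s
  · subst hu
    rw [if_neg notMem_conflictSet_self]
    simp
  · have hmem : u ∈ insert s (G.neighborFinset s) ↔ G.Adj s u := by
      simp [hu]
    by_cases hconf : u ∈ conflictSet G ρ s
    · rw [if_pos hconf]
      have h := (mem_conflictSet.1 hconf).2
      by_cases hadj : G.Adj s u
      · have : ¬ ρ s = ρ u := fun he => (h.1 he) hadj
        cases h1 : ρ u <;> cases h2 : ρ s <;> rw [h1, h2] at this <;>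
          simp [hmem, hadj] at this ⊢
      · have : ρ s = ρ u := h.2 hadj
        cases h1 : ρ u <;> cases h2 : ρ s <;> rw [h1, h2] at this <;>
          simp [hmem, hadj] at this ⊢
    · rw [if_neg hconf]
      have h : ¬ Conflict G ρ s u := fun hc => hconf (mem_conflictSet.2 hc)
      have h2 : ¬ (ρ s = ρ u ↔ ¬ G.Adj s u) := fun hc => h ⟨fun he => hu he.symm, hc⟩
      by_cases hadj : G.Adj s u
      · have : ρ s = ρ u := by tauto
        cases ha : ρ u <;> cases hb : ρ s <;> rw [ha, hb] at this <;>
          simp [hmem, hadj] at this ⊢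
      · have : ¬ ρ s = ρ u := by tauto
        cases ha : ρ u <;> cases hb : ρ s <;> rw [ha, hb] at this <;>
          simp [hmem, hadj] at this ⊢

lemma beq_same (ρ : V → Bool) (s u w : V) :
    (ρ u == ρ s) = (ρ w == ρ s) ↔ ρ u = ρ w := by
  cases h1 : ρ u <;> cases h2 : ρ w <;> cases h3 : ρ s <;> simp

/-- Corollary 7: if every extreme 2-partition has `h₂` cost larger than
`k`, and there exists a non-trivial non-extreme 2-partition `π` with `h₂(π) ≤ k`, then for
some vertex `s` there is a set `F` with `|F| ≤ √(k/n)` which is a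
`(√(nk), √(n(n−1)/2))`-feasible flipping set for `π₀ = (N_G[s], V ∖ N_G[s])`. -/
theorem exists_feasible_flipping_set_h2 (G : SimpleGraph V) [DecidableRel G.Adj] (k : ℕ)
    (hext : ∀ σ : V → Bool,
      ((Finset.univ.filter (fun v => σ v = true)).card = 1 ∨
       (Finset.univ.filter (fun v => σ v = false)).card = 1) → k < h2 G σ)
    (π : V → Bool)
    (hnontriv : (Finset.univ.filter (fun v => π v = true)).Nonempty ∧
                (Finset.univ.filter (fun v => π v = false)).Nonempty)
    (hnonext : (Finset.univ.filter (fun v => π v = true)).card ≠ 1 ∧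
               (Finset.univ.filter (fun v => π v = false)).card ≠ 1)
    (hk : h2 G π ≤ k) :
    ∃ (s : V) (F : Finset V),
      (F.card : ℝ) ≤ Real.sqrt ((k : ℝ) / (Fintype.card V : ℝ)) ∧
      (h1 G (flipSet (fun u => decide (u ∈ insert s (G.neighborFinset s))) F) : ℝ) ≤
        Real.sqrt ((Fintype.card V : ℝ) * k) ∧
      ∀ v : V,
        (cNum G (flipSet (fun u => decide (u ∈ insert s (G.neighborFinset s))) F) v : ℝ) ≤
          Real.sqrt ((Fintype.card V : ℝ) * ((Fintype.card V : ℝ) - 1) / 2) := by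
  classical
  set n := Fintype.card V with hncard
  -- the finite set of non-trivial, non-extreme partitions
  set S : Finset (V → Bool) := univ.filter (fun σ =>
    (univ.filter (fun v => σ v = true)).Nonempty ∧
    (univ.filter (fun v => σ v = false)).Nonempty ∧
    (univ.filter (fun v => σ v = true)).card ≠ 1 ∧
    (univ.filter (fun v => σ v = false)).card ≠ 1) with hSdef
  have hπS : π ∈ S := by
    rw [hSdef, mem_filter]
    exact ⟨mem_univ _, hnontriv.1, hnontriv.2, hnonext.1, hnonext.2⟩
  obtain ⟨ρ, hρS, hρmin⟩ := S.exists_min_image (h2 G) ⟨π, hπS⟩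
  have hρP := (mem_filter.1 hρS).2
  obtain ⟨hP1, hP2, hP3, hP4⟩ := hρP
  have hρk : h2 G ρ ≤ k := le_trans (hρmin π hπS) hk
  have htc : 2 ≤ (univ.filter (fun v => ρ v = true)).card := by
    have := Finset.card_pos.2 hP1; omega
  have hfc : 2 ≤ (univ.filter (fun v => ρ v = false)).card := by
    have := Finset.card_pos.2 hP2; omega
  -- local minimality under single flips
  have hloc : ∀ v, h2 G ρ ≤ h2 G (flipSet ρ {v}) := by
    intro v
    set σ := flipSet ρ {v} with hσdef
    have hσu : ∀ u, u ≠ v → σ u = ρ u := by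
      intro u hu; simp [hσdef, flipSet, hu]
    by_cases hcard : (univ.filter (fun x => σ x = true)).card = 1 ∨
        (univ.filter (fun x => σ x = false)).card = 1
    · exact le_trans hρk (le_of_lt (hext σ hcard))
    · push_neg at hcard
      obtain ⟨ut, hut, hutv⟩ := Finset.exists_mem_ne
        (s := univ.filter (fun x => ρ x = true)) (by omega) v
      obtain ⟨uf, huf, hufv⟩ := Finset.exists_mem_ne
        (s := univ.filter (fun x => ρ x = false)) (by omega) v
      have h1t : (univ.filter (fun x => σ x = true)).Nonempty :=
        ⟨ut, mem_filter.2 ⟨mem_univ _, by rw [hσu ut hutv]; exact (mem_filter.1 hut).2⟩⟩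
      have h1f : (univ.filter (fun x => σ x = false)).Nonempty :=
        ⟨uf, mem_filter.2 ⟨mem_univ _, by rw [hσu uf hufv]; exact (mem_filter.1 huf).2⟩⟩
      exact hρmin σ (mem_filter.2 ⟨mem_univ _, h1t, h1f, hcard.1, hcard.2⟩)
  -- basic facts
  have hVne : (univ : Finset V).Nonempty := ⟨hP1.choose, mem_univ _⟩
  have hnpos : 0 < n := by rw [hncard]; exact Fintype.card_pos_iff.2 ⟨hP1.choose⟩
  -- the vertex of maximum conflict
  obtain ⟨vm, -, hvm⟩ := Finset.exists_max_image univ (cNum G ρ) hVne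
  have hkey : 2 * ((cNum G ρ vm) ^ 2 + cNum G ρ vm) + n ≤ n ^ 2 :=
    key_ineq (fun u => hvm u (mem_univ u)) (hloc vm)
  -- the vertex of minimum conflict
  obtain ⟨s, -, hs⟩ := Finset.exists_min_image univ (cNum G ρ) hVne
  have hsk : n * (cNum G ρ s) ^ 2 ≤ k := by
    have h := Finset.card_nsmul_le_sum univ (fun u => (cNum G ρ u) ^ 2) ((cNum G ρ s) ^ 2)
      (fun u _ => Nat.pow_le_pow_left (hs u (mem_univ u)) 2)
    rw [card_univ, smul_eq_mul] at h
    exact le_trans h hρk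
  refine ⟨s, conflictSet G ρ s, ?_, ?_, ?_⟩
  · -- |F| ≤ √(k/n)
    have hF : (conflictSet G ρ s).card = cNum G ρ s := rfl
    rw [hF, Real.le_sqrt (by positivity) (by positivity)]
    rw [le_div_iff₀ (by exact_mod_cast hnpos)]
    calc ((cNum G ρ s : ℝ)) ^ 2 * n = (n * (cNum G ρ s) ^ 2 : ℕ) := by push_cast; ring
      _ ≤ k := by exact_mod_cast hsk
  · -- h1 bound
    have hτ : ∀ u, cNum G (flipSet (fun u => decide (u ∈ insert s (G.neighborFinset s)))
        (conflictSet G ρ s)) u = cNum G ρ u := by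
      intro u
      rw [flip_conflictSet_eq]
      exact cNum_congr (fun a b => beq_same ρ s a b) u
    have hh1 : h1 G (flipSet (fun u => decide (u ∈ insert s (G.neighborFinset s)))
        (conflictSet G ρ s)) = h1 G ρ := by
      unfold h1; exact Finset.sum_congr rfl (fun u _ => hτ u)
    rw [hh1, Real.le_sqrt (by positivity) (by positivity)]
    have hcs : ((h1 G ρ : ℝ)) ^ 2 ≤ (n : ℝ) * (h2 G ρ) := by
      unfold h1 h2
      push_cast
      have := sq_sum_le_card_mul_sum_sq (s := (univ : Finset V))
        (f := fun u => (cNum G ρ u : ℝ))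
      rw [card_univ] at this
      calc (∑ u, (cNum G ρ u : ℝ)) ^ 2 ≤ (n : ℝ) * ∑ u, (cNum G ρ u : ℝ) ^ 2 := this
        _ = (n : ℝ) * ∑ u, (cNum G ρ u : ℝ) ^ 2 := rfl
    refine le_trans hcs ?_
    have : (h2 G ρ : ℝ) ≤ k := by exact_mod_cast hρk
    have hn0 : (0:ℝ) ≤ n := by positivity
    nlinarith
  · -- per-vertex bound
    intro v
    have hτ : cNum G (flipSet (fun u => decide (u ∈ insert s (G.neighborFinset s)))
        (conflictSet G ρ s)) v = cNum G ρ v := by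
      rw [flip_conflictSet_eq]
      exact cNum_congr (fun a b => beq_same ρ s a b) v
    rw [hτ, Real.le_sqrt (by positivity) ?hyp]
    case hyp =>
      have : (1:ℝ) ≤ n := by exact_mod_cast hnpos
      nlinarith
    have hcv : cNum G ρ v ≤ cNum G ρ vm := hvm v (mem_univ v)
    have h2m : 2 * (cNum G ρ v) ^ 2 + n ≤ n ^ 2 := by
      have := Nat.pow_le_pow_left hcv 2
      omega
    have : (2 * (cNum G ρ v) ^ 2 + n : ℝ) ≤ (n:ℝ) ^ 2 := by exact_mod_cast h2m
    rw [le_div_iff₀ (by norm_num : (0:ℝ) < 2)]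
    nlinarith
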